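/- (Integrability of the modified integrand for the trinomial equation.) Let n ≥ 2 be a natural number and let x ∈ ℂ be such that for every t ∈ [0,1], 1 + x·t^{(n−1)/n}·(1−t)^{1/n}·e^{−πi/n} ≠ 0 and 1 + x·t^{(n−1)/n}·(1−t)^{1/n}·e^{πi/n} ≠ 0. Then the complex-valued function t ↦ t^{1/(2n)−1} · (1−t)^{−1/(2n)−1} · [ e^{πi/(2n)}·log(1 + x·t^{(n−1)/n}·(1−t)^{1/n}·e^{−πi/n}) − e^{−πi/(2n)}·log(1 + x·t^{(n−1)/n}·(1−t)^{1/n}·e^{πi/n}) ] is interval integrable on [0,1] with respect to Lebesgue measure. -/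

import Mathlib

/-!
The argument of each logarithm is `1 + x t^{(n-1)/n} (1-t)^{1/n} e^{∓πi/n}`, a continuous
function of `t ∈ [0,1]` whose values form a compact set avoiding `0`; on such a set
`log w = O(‖w - 1‖)` (Taylor near `1`, boundedness of `log ‖w‖` and of the argument elsewhere).
Hence the bracket is `O((1-t)^{1/n})`, and the integrand is dominated by a multiple of the Beta
integrand `t^{1/(2n)-1} (1-t)^{1/(2n)-1}`.
-/

open MeasureTheory Set

theorem Complex.norm_log_le_abs_log_norm_add_pi (w : ℂ) :
    ‖Complex.log w‖ ≤ |Real.log ‖w‖| + Real.pi := by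
  calc ‖Complex.log w‖ ≤ |(Complex.log w).re| + |(Complex.log w).im| :=
        Complex.norm_le_abs_re_add_abs_im _
    _ ≤ |Real.log ‖w‖| + Real.pi := by
      rw [Complex.log_re, Complex.log_im]
      exact add_le_add_right (Complex.abs_arg_le_pi w) _

theorem IsCompact.exists_norm_log_le_mul_norm_sub_one {S : Set ℂ} (hS : IsCompact S)
    (h0 : (0 : ℂ) ∉ S) : ∃ C, ∀ w ∈ S, ‖Complex.log w‖ ≤ C * ‖w - 1‖ := by
  have hcont : ContinuousOn (fun w : ℂ => Real.log ‖w‖) S :=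
    Real.continuousOn_log.comp continuous_norm.continuousOn fun w hw =>
      norm_ne_zero_iff.mpr (ne_of_mem_of_not_mem hw h0)
  obtain ⟨M, hM⟩ := hS.exists_bound_of_continuousOn hcont
  refine ⟨max (3 / 2) (2 * (M + Real.pi)), fun w hw => ?_⟩
  rcases le_or_gt ‖w - 1‖ (1 / 2) with hnear | hfar
  · calc ‖Complex.log w‖ = ‖Complex.log (1 + (w - 1))‖ := by rw [add_sub_cancel]
      _ ≤ 3 / 2 * ‖w - 1‖ := Complex.norm_log_one_add_half_le_self hnear
      _ ≤ _ := by gcongr; exact le_max_left _ _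
  · have hlog : |Real.log ‖w‖| ≤ M := hM w hw
    calc ‖Complex.log w‖ ≤ M + Real.pi := by
          linarith [Complex.norm_log_le_abs_log_norm_add_pi w]
      _ ≤ 2 * (M + Real.pi) * ‖w - 1‖ := by
          nlinarith [abs_nonneg (Real.log ‖w‖), Real.pi_pos]
      _ ≤ _ := by gcongr; exact le_max_right _ _

theorem exists_norm_log_one_add_le_rpow {a b : ℝ} (ha : 0 ≤ a) (hb : 0 ≤ b) (x e : ℂ)
    (h : ∀ t ∈ Icc (0 : ℝ) 1, 1 + x * ((t ^ a : ℝ) : ℂ) * (((1 - t) ^ b : ℝ) : ℂ) * e ≠ 0) :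
    ∃ C, ∀ t ∈ Icc (0 : ℝ) 1,
      ‖Complex.log (1 + x * ((t ^ a : ℝ) : ℂ) * (((1 - t) ^ b : ℝ) : ℂ) * e)‖ ≤
        C * (1 - t) ^ b := by
  set w : ℝ → ℂ := fun t => 1 + x * ((t ^ a : ℝ) : ℂ) * (((1 - t) ^ b : ℝ) : ℂ) * e
  have hw : Continuous w := by
    have := Real.continuous_rpow_const ha
    have := Real.continuous_rpow_const hb
    fun_prop
  obtain ⟨C, hC⟩ := (isCompact_Icc.image hw).exists_norm_log_le_mul_norm_sub_one
    (by rintro ⟨t, ht, h0⟩; exact h t ht h0)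
  refine ⟨max C 0 * (‖x‖ * ‖e‖), fun t ht => ?_⟩
  have hta : t ^ a ≤ 1 := Real.rpow_le_one ht.1 ht.2 ha
  have htb : 0 ≤ (1 - t) ^ b := Real.rpow_nonneg (by linarith [ht.2]) b
  have hdist : ‖w t - 1‖ ≤ ‖x‖ * ‖e‖ * (1 - t) ^ b := by
    simp only [w, add_sub_cancel_left, norm_mul, Complex.norm_real, Real.norm_eq_abs,
      abs_of_nonneg (Real.rpow_nonneg ht.1 a), abs_of_nonneg htb]
    calc ‖x‖ * t ^ a * (1 - t) ^ b * ‖e‖ = ‖x‖ * ‖e‖ * (1 - t) ^ b * t ^ a := by ring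
      _ ≤ ‖x‖ * ‖e‖ * (1 - t) ^ b := mul_le_of_le_one_right (by positivity) hta
  calc ‖Complex.log (w t)‖ ≤ C * ‖w t - 1‖ := hC _ (mem_image_of_mem w ht)
    _ ≤ max C 0 * ‖w t - 1‖ := by gcongr; exact le_max_left _ _
    _ ≤ max C 0 * (‖x‖ * ‖e‖ * (1 - t) ^ b) := by gcongr
    _ = _ := by ring

theorem intervalIntegrable_rpow_mul_one_sub_rpow {a b : ℝ} (ha : 0 < a) (hb : 0 < b) :
    IntervalIntegrable (fun t : ℝ => t ^ (a - 1) * (1 - t) ^ (b - 1)) volume 0 1 := by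
  have hB := Complex.betaIntegral_convergent (u := a) (v := b) (by simpa) (by simpa)
  rw [intervalIntegrable_iff_integrableOn_Ioo_of_le zero_le_one] at hB ⊢
  refine IntegrableOn.congr_fun (Integrable.norm hB) (fun t ht => ?_) measurableSet_Ioo
  have h1t : 0 < 1 - t := sub_pos.mpr ht.2
  rw [norm_mul, Complex.norm_cpow_eq_rpow_re_of_pos ht.1, show (1 : ℂ) - t = (1 - t : ℝ) by simp,
    Complex.norm_cpow_eq_rpow_re_of_pos h1t]
  simp

theorem intervalIntegrable_rpow_mul_one_sub_rpow_mul_of_norm_le {a b c K : ℝ} {F : ℝ → ℂ}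
    (ha : 0 < a) (hbc : 0 < b + c) (hF : AEStronglyMeasurable F volume)
    (hFle : ∀ t ∈ Ioo (0 : ℝ) 1, ‖F t‖ ≤ K * (1 - t) ^ c) :
    IntervalIntegrable (fun t : ℝ => ((t ^ (a - 1) : ℝ) : ℂ) * (((1 - t) ^ (b - 1) : ℝ) : ℂ) * F t)
      volume 0 1 := by
  have hbeta := (intervalIntegrable_rpow_mul_one_sub_rpow ha hbc).const_mul K
  rw [intervalIntegrable_iff_integrableOn_Ioo_of_le zero_le_one] at hbeta ⊢
  refine hbeta.mono' ?_ (ae_restrict_of_forall_mem measurableSet_Ioo fun t ht => ?_)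
  · exact ((by fun_prop : Measurable fun t : ℝ =>
      ((t ^ (a - 1) : ℝ) : ℂ) * (((1 - t) ^ (b - 1) : ℝ) : ℂ)).aestronglyMeasurable.mul
        hF).restrict
  · have h1t : 0 < 1 - t := sub_pos.mpr ht.2
    calc ‖((t ^ (a - 1) : ℝ) : ℂ) * (((1 - t) ^ (b - 1) : ℝ) : ℂ) * F t‖
        = t ^ (a - 1) * (1 - t) ^ (b - 1) * ‖F t‖ := by
          rw [norm_mul, norm_mul, Complex.norm_real, Complex.norm_real, Real.norm_of_nonneg
            (Real.rpow_nonneg ht.1.le _), Real.norm_of_nonneg (Real.rpow_nonneg h1t.le _)]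
      _ ≤ t ^ (a - 1) * (1 - t) ^ (b - 1) * (K * (1 - t) ^ c) :=
          mul_le_mul_of_nonneg_left (hFle t ht)
            (mul_nonneg (Real.rpow_nonneg ht.1.le _) (Real.rpow_nonneg h1t.le _))
      _ = K * (t ^ (a - 1) * (1 - t) ^ (b + c - 1)) := by
          rw [show b + c - 1 = b - 1 + c by ring, Real.rpow_add h1t]; ring

/-- Integrability of the modified integrand for the trinomial equation
`zⁿ + x·z^{n-1} - 1 = 0`: if `x` lies outside the exceptional sets `Σ′₋ ∪ Σ′₊`, then the
modified (μ = 1/2) integrand is interval integrable on `[0,1]`. -/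
theorem modified_integrand_integrable (n : ℕ) (hn : 2 ≤ n) (x : ℂ)
    (hminus : ∀ t ∈ Set.Icc (0 : ℝ) 1,
      1 + x * ((t ^ (((n : ℝ) - 1) / (n : ℝ)) : ℝ) : ℂ) *
        (((1 - t) ^ ((1 : ℝ) / (n : ℝ)) : ℝ) : ℂ) *
        Complex.exp (-((Real.pi : ℂ) * Complex.I / (n : ℂ))) ≠ 0)
    (hplus : ∀ t ∈ Set.Icc (0 : ℝ) 1,
      1 + x * ((t ^ (((n : ℝ) - 1) / (n : ℝ)) : ℝ) : ℂ) *
        (((1 - t) ^ ((1 : ℝ) / (n : ℝ)) : ℝ) : ℂ) *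
        Complex.exp ((Real.pi : ℂ) * Complex.I / (n : ℂ)) ≠ 0) :
    IntervalIntegrable (fun t : ℝ =>
      ((t ^ (1 / (2 * (n : ℝ)) - 1) : ℝ) : ℂ) *
        (((1 - t) ^ (-(1 / (2 * (n : ℝ))) - 1) : ℝ) : ℂ) *
        (Complex.exp ((Real.pi : ℂ) * Complex.I / (2 * (n : ℂ))) *
            Complex.log (1 + x * ((t ^ (((n : ℝ) - 1) / (n : ℝ)) : ℝ) : ℂ) *
              (((1 - t) ^ ((1 : ℝ) / (n : ℝ)) : ℝ) : ℂ) *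
              Complex.exp (-((Real.pi : ℂ) * Complex.I / (n : ℂ)))) -
          Complex.exp (-((Real.pi : ℂ) * Complex.I / (2 * (n : ℂ)))) *
            Complex.log (1 + x * ((t ^ (((n : ℝ) - 1) / (n : ℝ)) : ℝ) : ℂ) *
              (((1 - t) ^ ((1 : ℝ) / (n : ℝ)) : ℝ) : ℂ) *
              Complex.exp ((Real.pi : ℂ) * Complex.I / (n : ℂ)))))
      MeasureTheory.volume 0 1 := by
  have hn1 : (1 : ℝ) ≤ n := by exact_mod_cast (by omega : 1 ≤ n)
  have hexp₁ : 0 ≤ ((n : ℝ) - 1) / n := div_nonneg (by linarith) (by linarith)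
  have hexp₂ : 0 ≤ (1 : ℝ) / n := by positivity
  obtain ⟨C₁, hC₁⟩ := exists_norm_log_one_add_le_rpow hexp₁ hexp₂ x _ hminus
  obtain ⟨C₂, hC₂⟩ := exists_norm_log_one_add_le_rpow hexp₁ hexp₂ x _ hplus
  have hbc : 0 < -(1 / (2 * (n : ℝ))) + 1 / n := by
    rw [show -(1 / (2 * (n : ℝ))) + 1 / n = 1 / (2 * n) by field_simp; ring]
    positivity
  refine intervalIntegrable_rpow_mul_one_sub_rpow_mul_of_norm_le
    (K := ‖Complex.exp ((Real.pi : ℂ) * Complex.I / (2 * (n : ℂ)))‖ * C₁ +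
      ‖Complex.exp (-((Real.pi : ℂ) * Complex.I / (2 * (n : ℂ))))‖ * C₂)
    (by positivity) hbc (by fun_prop) fun t ht => ?_
  have ht' : t ∈ Icc (0 : ℝ) 1 := Ioo_subset_Icc_self ht
  refine (norm_sub_le _ _).trans ?_
  rw [norm_mul, norm_mul]
  exact (add_le_add (mul_le_mul_of_nonneg_left (hC₁ t ht') (norm_nonneg _))
    (mul_le_mul_of_nonneg_left (hC₂ t ht') (norm_nonneg _))).trans_eq (by ring)
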